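/- arXiv:math/0701245 — 9 statements merged into one kernel-verified Lean document; each statement's English description precedes it below -/
import Mathlib

section
/- Cofree coalgebras exist over a field: for every K-vector space V there exist a coassociative counital K-coalgebra Γ and a K-linear map π : Γ → V such that for every coassociative counital K-coalgebra C and every K-linear map f : C → V there is a unique coalgebra morphism g : C → Γ with π ∘ g = f. -/
/-!
Choose a basis `B` of `V`, so that `V ≃ B →₀ K`. A function `x : FreeMonoid B → K` on words is a
functional on the tensor algebra of `V`, and deconcatenation `x ↦ ((u, v) ↦ x (u * v))` is dual to
its multiplication. Over a field, tensors are separated by products of separating functionals, so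
for every subspace `S` evaluation embeds `S ⊗ S` into functions on pairs of words. Hence the largest
subspace `Γ` that deconcatenation maps into `Γ ⊗ Γ` and whose degree-one coefficients `x (of b)` are
finitely supported (a greatest fixed point) carries a comultiplication; its counit is evaluation at
the empty word and `π` reads off the degree-one coefficients.

The evaluations `ev w` separate the points of `Γ` and multiply under convolution as words
concatenate, so the coalgebra axioms of `Γ` reduce to associativity and unitality in
`FreeMonoid B`. Given `f : C → B →₀ K`, the convolution products of the coordinates of `f` along
words are the coefficients of the universal map `C → Γ`. Conversely, precomposition with a
coalgebra map `g : C → Γ` is multiplicative for convolution, so `w ↦ ev w ∘ g` is determined by its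
values on letters, that is, by `π ∘ g`.
-/

open TensorProduct LinearMap WithConv

section CommSemiring

variable {R M N : Type*} [CommSemiring R] [AddCommMonoid M] [Module R M] [AddCommMonoid N]
  [Module R N]

namespace TensorProduct

theorem mul'_map_apply_eq_rid_lTensor (f : M →ₗ[R] R) (g : N →ₗ[R] R) (t : M ⊗[R] N) :
    mul' R R (map f g t) = f (TensorProduct.rid R M (g.lTensor M t)) := by
  induction t using TensorProduct.induction_on <;> simp_all [mul_comm]

theorem mul'_map_apply_eq_lid_rTensor (f : M →ₗ[R] R) (g : N →ₗ[R] R) (t : M ⊗[R] N) :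
    mul' R R (map f g t) = g (TensorProduct.lid R N (f.rTensor N t)) := by
  induction t using TensorProduct.induction_on <;> simp_all

theorem mul'_map_mul'_map_comp_assoc {P : Type*} [AddCommMonoid P] [Module R P]
    (f : M →ₗ[R] R) (g : N →ₗ[R] R) (h : P →ₗ[R] R) :
    mul' R R ∘ₗ map f (mul' R R ∘ₗ map g h) ∘ₗ (TensorProduct.assoc R M N P).toLinearMap =
      mul' R R ∘ₗ map (mul' R R ∘ₗ map f g) h := by
  ext; simp [mul_assoc]

end TensorProduct

end CommSemiring

section Field

variable {K M N ι κ : Type*} [Field K] [AddCommGroup M] [Module K M] [AddCommGroup N]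
  [Module K N]

theorem TensorProduct.pi_mul'_map_injective {φ : ι → Module.Dual K M}
    {ψ : κ → Module.Dual K N} (hφ : Function.Injective (LinearMap.pi φ))
    (hψ : Function.Injective (LinearMap.pi ψ)) :
    Function.Injective (LinearMap.pi fun p : ι × κ ↦ mul' K K ∘ₗ map (φ p.1) (ψ p.2)) := by
  rw [← LinearMap.ker_eq_bot, LinearMap.ker_eq_bot']
  intro t ht
  have hrow (i : ι) : TensorProduct.lid K N ((φ i).rTensor N t) = 0 :=
    hψ <| funext fun j ↦ by simpa [← mul'_map_apply_eq_lid_rTensor] using congr_fun ht (i, j)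
  let c := Module.Free.chooseBasis K N
  have hcoeff (k) : TensorProduct.rid K M ((c.coord k).lTensor M t) = 0 :=
    hφ <| funext fun i ↦ by
      simp [← mul'_map_apply_eq_rid_lTensor, mul'_map_apply_eq_lid_rTensor, hrow]
  classical
  apply (equivFinsuppOfBasisRight c).injective
  ext k
  simpa [equivFinsuppOfBasisRight_apply] using hcoeff k

variable {C D : Type*} [AddCommGroup C] [Module K C] [AddCommGroup D] [Module K D]

abbrev Coalgebra.ofSeparating [CoalgebraStruct K C] (φ : ι → Module.Dual K C)
    (hφ : Function.Injective (LinearMap.pi φ))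
    (conv_assoc : ∀ i j k, toConv (φ i) * toConv (φ j) * toConv (φ k) =
      toConv (φ i) * (toConv (φ j) * toConv (φ k)))
    (counit_conv : ∀ i, toConv Coalgebra.counit * toConv (φ i) = toConv (φ i))
    (conv_counit : ∀ i, toConv (φ i) * toConv Coalgebra.counit = toConv (φ i)) :
    Coalgebra K C where
  coassoc := by
    ext x
    refine pi_mul'_map_injective hφ (pi_mul'_map_injective hφ hφ) (funext fun ⟨i, j, k⟩ ↦ ?_)
    have lhs := congr($(mul'_map_mul'_map_comp_assoc (φ i) (φ j) (φ k))
      (comul.rTensor C (comul x)))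
    have conv := congr($(conv_assoc i j k) x)
    simp only [LinearMap.convMul_def, ofConv_toConv, coe_comp, Function.comp_apply,
      map_rTensor] at lhs conv
    simp only [LinearMap.pi_apply, coe_comp, Function.comp_apply, map_lTensor]
    exact lhs.trans conv
  rTensor_counit_comp_comul := by
    ext x
    apply (_root_.TensorProduct.lid K C).injective
    refine hφ (funext fun i ↦ ?_)
    simpa [← mul'_map_apply_eq_lid_rTensor] using congr($(counit_conv i) x)
  lTensor_counit_comp_comul := by
    ext x
    apply (_root_.TensorProduct.rid K C).injective
    refine hφ (funext fun i ↦ ?_)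
    simpa [← mul'_map_apply_eq_rid_lTensor] using congr($(conv_counit i) x)

def CoalgHom.ofConvMul [CoalgebraStruct K C] [CoalgebraStruct K D] (φ : ι → Module.Dual K D)
    (hφ : Function.Injective (LinearMap.pi φ)) (g : C →ₗ[K] D)
    (counit_comp : Coalgebra.counit ∘ₗ g = Coalgebra.counit)
    (conv_comp : ∀ i j, (toConv (φ i) * toConv (φ j)).ofConv ∘ₗ g =
      (toConv (φ i ∘ₗ g) * toConv (φ j ∘ₗ g)).ofConv) :
    C →ₗc[K] D where
  __ := g
  counit_comp := counit_comp
  map_comp_comul := by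
    ext x
    refine pi_mul'_map_injective hφ hφ (funext fun ⟨i, j⟩ ↦ ?_)
    simpa [LinearMap.convMul_def, map_map] using congr($(conv_comp i j) x).symm

end Field

def CoalgHom.precompConv {R A C D : Type*} [CommSemiring R] [Semiring A] [Algebra R A]
    [AddCommMonoid C] [Module R C] [Coalgebra R C] [AddCommMonoid D] [Module R D] [Coalgebra R D]
    (g : C →ₗc[R] D) : WithConv (D →ₗ[R] A) →* WithConv (C →ₗ[R] A) where
  toFun f := toConv (f.ofConv ∘ₗ g.toLinearMap)
  map_one' := by ext; simp
  map_mul' f f' := by rw [LinearMap.convMul_comp_coalgHom_distrib]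

noncomputable section

namespace CofreeCoalgebra

variable {K : Type*} [Field K] {B : Type*}

def ev (S : Submodule K (FreeMonoid B → K)) (w : FreeMonoid B) : Module.Dual K S :=
  LinearMap.proj w ∘ₗ S.subtype

theorem pi_ev_injective (S : Submodule K (FreeMonoid B → K)) :
    Function.Injective (LinearMap.pi (ev S)) :=
  fun _ _ h ↦ Subtype.ext (funext fun w ↦ congr_fun h w)

def pairEval (S : Submodule K (FreeMonoid B → K)) :
    S ⊗[K] S →ₗ[K] (FreeMonoid B × FreeMonoid B → K) :=
  LinearMap.pi fun p ↦ mul' K K ∘ₗ map (ev S p.1) (ev S p.2)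

theorem pairEval_injective (S : Submodule K (FreeMonoid B → K)) :
    Function.Injective (pairEval S) :=
  pi_mul'_map_injective (pi_ev_injective S) (pi_ev_injective S)

theorem range_pairEval_mono {S T : Submodule K (FreeMonoid B → K)} (hST : S ≤ T) :
    range (pairEval S) ≤ range (pairEval T) := by
  have : pairEval S = pairEval T ∘ₗ map (Submodule.inclusion hST) (Submodule.inclusion hST) := by
    ext; rfl
  rw [this]
  exact range_comp_le_range _ _

variable (K B)

def deconcat : (FreeMonoid B → K) →ₗ[K] (FreeMonoid B × FreeMonoid B → K) :=
  funLeft K K fun p ↦ p.1 * p.2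

def step : Submodule K (FreeMonoid B → K) →o Submodule K (FreeMonoid B → K) where
  toFun S := (range (pairEval S)).comap (deconcat K B) ⊓
    (range (Finsupp.lcoeFun (R := K))).comap (funLeft K K FreeMonoid.of)
  monotone' _ _ hST := inf_le_inf_right _ (Submodule.comap_mono (range_pairEval_mono hST))

variable {K B} in
theorem mem_step {S : Submodule K (FreeMonoid B → K)} {x : FreeMonoid B → K} :
    x ∈ step K B S ↔
      deconcat K B x ∈ range (pairEval S) ∧ x ∘ FreeMonoid.of ∈ range (Finsupp.lcoeFun (R := K)) :=
  Iff.rfl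

def carrier : Submodule K (FreeMonoid B → K) := (step K B).gfp

theorem carrier_le_step : carrier K B ≤ step K B (carrier K B) := (step K B).gfp_le_map le_rfl

instance : CoalgebraStruct K (carrier K B) where
  comul := codRestrictOfInjective (deconcat K B ∘ₗ (carrier K B).subtype) (pairEval _)
    (pairEval_injective _) fun x ↦ (mem_step.1 (carrier_le_step K B x.2)).1
  counit := ev _ 1

theorem pairEval_comul (x : carrier K B) :
    pairEval (carrier K B) (Coalgebra.comul x) = deconcat K B x :=
  codRestrictOfInjective_comp_apply _ _ _ _ x

theorem ev_mul (u v : FreeMonoid B) :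
    toConv (ev (carrier K B) (u * v)) = toConv (ev _ u) * toConv (ev _ v) := by
  ext x
  exact (congr_fun (pairEval_comul K B x) (u, v)).symm

instance : Coalgebra K (carrier K B) :=
  Coalgebra.ofSeparating (ev _) (pi_ev_injective _)
    (fun _ _ _ ↦ by simp only [← ev_mul, mul_assoc])
    (fun _ ↦ show toConv (ev _ 1) * _ = _ by rw [← ev_mul, one_mul])
    (fun _ ↦ show _ * toConv (ev _ 1) = _ by rw [← ev_mul, mul_one])

def evHom : FreeMonoid B →* WithConv (carrier K B →ₗ[K] K) where
  toFun w := toConv (ev _ w)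
  map_one' := by ext; simp [Coalgebra.counit]
  map_mul' := ev_mul K B

def proj : carrier K B →ₗ[K] B →₀ K :=
  codRestrictOfInjective (funLeft K K FreeMonoid.of ∘ₗ (carrier K B).subtype) Finsupp.lcoeFun
    DFunLike.coe_injective fun x ↦ (mem_step.1 (carrier_le_step K B x.2)).2

variable {K B}

theorem proj_apply (x : carrier K B) (b : B) : proj K B x b = x.1 (FreeMonoid.of b) :=
  congr_fun (codRestrictOfInjective_comp_apply _ (Finsupp.lcoeFun (R := K)) _ _ x) b

variable {C : Type*} [AddCommGroup C] [Module K C] [Coalgebra K C]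

def wordFunctional (f : C →ₗ[K] B →₀ K) : FreeMonoid B →* WithConv (C →ₗ[K] K) :=
  FreeMonoid.lift fun b ↦ toConv (Finsupp.lapply b ∘ₗ f)

def coeffs (f : C →ₗ[K] B →₀ K) : C →ₗ[K] FreeMonoid B → K :=
  LinearMap.pi fun w ↦ (wordFunctional f w).ofConv

theorem range_coeffs_le_carrier (f : C →ₗ[K] B →₀ K) : range (coeffs f) ≤ carrier K B := by
  refine (step K B).le_gfp fun _ ⟨c, hc⟩ ↦ hc ▸ mem_step.2 ⟨?_, ?_⟩
  · refine ⟨map (coeffs f).rangeRestrict (coeffs f).rangeRestrict (Coalgebra.comul c), ?_⟩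
    ext ⟨u, v⟩
    rw [pairEval, LinearMap.pi_apply, comp_apply, map_map]
    simp only [deconcat, coeffs, funLeft_apply, LinearMap.pi_apply, map_mul,
      LinearMap.convMul_apply]
    rfl
  · exact ⟨f c, funext fun b ↦ by simp [coeffs, wordFunctional]⟩

def lift (f : C →ₗ[K] B →₀ K) : C →ₗc[K] carrier K B :=
  CoalgHom.ofConvMul (ev _) (pi_ev_injective _)
    ((coeffs f).codRestrict _ fun c ↦ range_coeffs_le_carrier f ⟨c, rfl⟩)
    (by ext c; simp [Coalgebra.counit, ev, coeffs])
    fun u v ↦ by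
      rw [← ev_mul]
      exact congr_arg ofConv (map_mul (wordFunctional f) u v)

theorem proj_comp_lift (f : C →ₗ[K] B →₀ K) : proj K B ∘ₗ (lift f).toLinearMap = f := by
  ext c b
  simp [proj_apply, lift, CoalgHom.ofConvMul, coeffs, wordFunctional]

theorem eq_lift_proj_comp (g : C →ₗc[K] carrier K B) :
    g = lift (proj K B ∘ₗ g.toLinearMap) := by
  have key : g.precompConv.comp (evHom K B) = wordFunctional (proj K B ∘ₗ g.toLinearMap) :=
    FreeMonoid.hom_eq fun b ↦ by
      ext c
      simp [evHom, CoalgHom.precompConv, wordFunctional, ev, proj_apply]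
  ext c w
  simpa [evHom, CoalgHom.precompConv, ev, lift, CoalgHom.ofConvMul, coeffs] using congr($key w c)

theorem existsUnique_proj_comp_eq (f : C →ₗ[K] B →₀ K) :
    ∃! g : C →ₗc[K] carrier K B, proj K B ∘ₗ g.toLinearMap = f :=
  ⟨lift f, proj_comp_lift f, fun g hg ↦ hg ▸ eq_lift_proj_comp g⟩

end CofreeCoalgebra

end

/-- Cofree coalgebras exist over a field: for every `K`-vector space `V` there exist a
coassociative counital `K`-coalgebra `Γ` and a `K`-linear map `π : Γ → V` such that for every
coassociative counital `K`-coalgebra `C` and every `K`-linear map `f : C → V` there is a unique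
coalgebra morphism `g : C → Γ` with `π ∘ g = f`. -/
theorem cofree_coalgebra_exists (K : Type) [Field K]
    (V : Type) [AddCommGroup V] [Module K V] :
    ∃ (Γ : CoalgCat K) (π : Γ →ₗ[K] V),
      ∀ (C : Type) [AddCommGroup C] [Module K C] [Coalgebra K C] (f : C →ₗ[K] V),
        ∃! g : C →ₗc[K] Γ, π ∘ₗ g.toLinearMap = f := by
  let b := (Module.Basis.ofVectorSpace K V).reindex Equiv.ulift.symm
  refine ⟨CoalgCat.of K (CofreeCoalgebra.carrier K _),
    b.repr.symm.toLinearMap ∘ₗ CofreeCoalgebra.proj K _, fun C _ _ _ f ↦ ?_⟩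
  simpa only [comp_assoc, LinearEquiv.toLinearMap_symm_comp_eq] using
    CofreeCoalgebra.existsUnique_proj_comp_eq (b.repr.toLinearMap ∘ₗ f)
end

section
/- The internal hom into a cofree coalgebra is cofree on the linear hom space: let K be a field, C a K-coalgebra, V a K-vector space, (Γ₁, π₁) a cofree coalgebra on V, and (Γ₂, π₂) a cofree coalgebra on the K-vector space of K-linear maps C → V. Then for every K-coalgebra B, the map sending a coalgebra morphism g : B → Γ₂ to the unique coalgebra morphism h : B ⊗ C → Γ₁ satisfying π₁(h(b ⊗ c)) = (π₂(g(b)))(c) for all b ∈ B, c ∈ C, is a bijection from the set of coalgebra morphisms B → Γ₂ onto the set of coalgebra morphisms B ⊗ C → Γ₁. -/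
open scoped TensorProduct

/-- The internal hom into a cofree coalgebra is cofree on the linear hom space: given a
`K`-coalgebra `C`, a `K`-vector space `V`, a cofree coalgebra `(Γ₁, π₁)` on `V` and a cofree
coalgebra `(Γ₂, π₂)` on `Hom_K(C, V)`, for every `K`-coalgebra `B` the correspondence sending a
coalgebra morphism `g : B → Γ₂` to the unique coalgebra morphism `h : B ⊗ C → Γ₁` with
`π₁(h(b ⊗ c)) = (π₂(g(b)))(c)` is a bijection between coalgebra morphisms `B → Γ₂` and
coalgebra morphisms `B ⊗ C → Γ₁`. -/
theorem internal_hom_into_cofree_is_cofree (K : Type) [Field K]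
    (C : Type) [AddCommGroup C] [Module K C] [Coalgebra K C]
    (V : Type) [AddCommGroup V] [Module K V]
    (Γ₁ : Type) [AddCommGroup Γ₁] [Module K Γ₁] [Coalgebra K Γ₁] (π₁ : Γ₁ →ₗ[K] V)
    (Γ₂ : Type) [AddCommGroup Γ₂] [Module K Γ₂] [Coalgebra K Γ₂]
    (π₂ : Γ₂ →ₗ[K] (C →ₗ[K] V))
    (hΓ₁ : ∀ (A : Type) [AddCommGroup A] [Module K A] [Coalgebra K A] (f : A →ₗ[K] V),
      ∃! g : A →ₗc[K] Γ₁, π₁ ∘ₗ g.toLinearMap = f)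
    (hΓ₂ : ∀ (A : Type) [AddCommGroup A] [Module K A] [Coalgebra K A]
      (f : A →ₗ[K] (C →ₗ[K] V)),
      ∃! g : A →ₗc[K] Γ₂, π₂ ∘ₗ g.toLinearMap = f)
    (B : Type) [AddCommGroup B] [Module K B] [Coalgebra K B] :
    (∀ g : B →ₗc[K] Γ₂, ∃! h : (B ⊗[K] C) →ₗc[K] Γ₁,
      ∀ (b : B) (c : C), π₁ (h (b ⊗ₜ[K] c)) = π₂ (g b) c) ∧
    (∀ h : (B ⊗[K] C) →ₗc[K] Γ₁, ∃! g : B →ₗc[K] Γ₂,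
      ∀ (b : B) (c : C), π₁ (h (b ⊗ₜ[K] c)) = π₂ (g b) c) := by
  constructor
  · intro g
    obtain ⟨h, hh, hu⟩ := hΓ₁ (B ⊗[K] C) (TensorProduct.lift (π₂ ∘ₗ g.toLinearMap))
    refine ⟨h, fun b c => ?_, fun h' hh' => hu h' ?_⟩
    · exact congrFun (congrArg DFunLike.coe hh) (b ⊗ₜ c)
    · exact TensorProduct.ext' fun b c => hh' b c
  · intro h
    obtain ⟨g, hg, hu⟩ := hΓ₂ B (TensorProduct.curry (π₁ ∘ₗ h.toLinearMap))
    refine ⟨g, fun b c => ?_, fun g' hg' => hu g' ?_⟩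
    · exact (congrFun (congrArg DFunLike.coe (congrFun (congrArg DFunLike.coe hg) b)) c).symm
    · exact LinearMap.ext fun b => LinearMap.ext fun c => (hg' b c).symm
end

section
/- Grouplike elements of an internal hom coalgebra correspond to coalgebra morphisms: let K be a field, C and D K-coalgebras, and (H, ev) an internal hom from C to D. For every grouplike element g of H (i.e. ε_H(g) = 1 and Δ_H(g) = g ⊗ g), the K-linear map c ↦ ev(g ⊗ c) is a coalgebra morphism C → D, and the assignment g ↦ (c ↦ ev(g ⊗ c)) is a bijection from the set of grouplike elements of H onto the set of coalgebra morphisms C → D. -/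
open scoped TensorProduct

open Coalgebra in
noncomputable def psiOf (K : Type) [Field K] (H : Type) [AddCommGroup H] [Module K H]
    [Coalgebra K H] (g : H) (hg1 : Coalgebra.counit (R := K) g = 1)
    (hg2 : Coalgebra.comul (R := K) g = g ⊗ₜ[K] g) : K →ₗc[K] H where
  toLinearMap := LinearMap.toSpanSingleton K H g
  counit_comp := by
    ext
    simp [hg1]
  map_comp_comul := by
    ext
    simp [CommSemiring.comul_apply, hg2, TensorProduct.smul_tmul']

/-- Grouplike elements of an internal hom coalgebra correspond to coalgebra morphisms: if
`(H, ev)` is an internal hom from the `K`-coalgebra `C` to the `K`-coalgebra `D`, then for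
every grouplike element `g` of `H` the map `c ↦ ev (g ⊗ c)` is a coalgebra morphism `C → D`,
and `g ↦ (c ↦ ev (g ⊗ c))` is a bijection from the grouplike elements of `H` onto the
coalgebra morphisms `C → D`. -/
theorem grouplike_elements_biject_with_coalgHoms (K : Type) [Field K]
    (C D H : Type) [AddCommGroup C] [Module K C] [Coalgebra K C]
    [AddCommGroup D] [Module K D] [Coalgebra K D]
    [AddCommGroup H] [Module K H] [Coalgebra K H]
    (ev : (H ⊗[K] C) →ₗc[K] D)
    (hH : ∀ (B : Type) [AddCommGroup B] [Module K B] [Coalgebra K B]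
      (φ : (B ⊗[K] C) →ₗc[K] D),
      ∃! ψ : B →ₗc[K] H,
        φ = ev.comp (Coalgebra.TensorProduct.map ψ (CoalgHom.id K C))) :
    (∀ g : H,
      (Coalgebra.counit (R := K) g = 1 ∧ Coalgebra.comul (R := K) g = g ⊗ₜ[K] g) →
      ∃ φ : C →ₗc[K] D, ∀ c : C, φ c = ev (g ⊗ₜ[K] c)) ∧
    (∀ φ : C →ₗc[K] D, ∃! g : H,
      (Coalgebra.counit (R := K) g = 1 ∧ Coalgebra.comul (R := K) g = g ⊗ₜ[K] g) ∧
      ∀ c : C, φ c = ev (g ⊗ₜ[K] c)) := by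
  constructor
  · rintro g ⟨hg1, hg2⟩
    refine ⟨(ev.comp (Coalgebra.TensorProduct.map (psiOf K H g hg1 hg2)
      (CoalgHom.id K C))).comp ((Coalgebra.TensorProduct.lid K C).symm : C →ₗc[K] (K ⊗[K] C)),
      fun c => ?_⟩
    simp [Coalgebra.TensorProduct.lid_symm_apply, Coalgebra.TensorProduct.map_tmul,
      psiOf, LinearMap.toSpanSingleton_apply]
  · intro φ
    obtain ⟨ψ, hψ, huniq⟩ := hH K (φ.comp ((Coalgebra.TensorProduct.lid K C) : (K ⊗[K] C) →ₗc[K] C))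
    have hev : ∀ c : C, φ c = ev (ψ 1 ⊗ₜ[K] c) := by
      intro c
      have := DFunLike.congr_fun hψ ((1 : K) ⊗ₜ[K] c)
      simpa [Coalgebra.TensorProduct.lid_tmul, Coalgebra.TensorProduct.map_tmul] using this
    refine ⟨ψ 1, ⟨⟨?_, ?_⟩, hev⟩, ?_⟩
    · rw [CoalgHomClass.counit_comp_apply]; simp [CommSemiring.counit_apply]
    · have := CoalgHomClass.map_comp_comul_apply ψ (1 : K)
      simpa [CommSemiring.comul_apply] using this.symm
    · rintro g' ⟨⟨hg1, hg2⟩, hg'⟩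
      have : psiOf K H g' hg1 hg2 = ψ := by
        apply huniq
        apply DFunLike.ext
        intro x
        induction x using TensorProduct.induction_on with
        | zero => simp
        | add a b ha hb => rw [map_add, map_add, ha, hb]
        | tmul k c =>
          show φ (k • c) = ev ((k • g') ⊗ₜ[K] c)
          rw [map_smul, hg', ← TensorProduct.smul_tmul', map_smul]
      calc g' = psiOf K H g' hg1 hg2 1 := by
            simp [psiOf, LinearMap.toSpanSingleton_apply]
          _ = ψ 1 := by rw [this]
end

section
/- The equalizer of a reflexive pair of coalgebra morphisms is a subcoalgebra: let K be a field, A and B K-coalgebras, and d⁰, d¹ : A → B coalgebra morphisms whose underlying K-linear maps admit a common K-linear retraction s : B → A with s ∘ d⁰ = id_A = s ∘ d¹. Then the subspace E := ker(d⁰ − d¹) of A satisfies Δ_A(x) ∈ E ⊗ E (the image of E ⊗ E inside A ⊗ A) for every x ∈ E; hence E is a subcoalgebra of A. -/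
open scoped TensorProduct

/-- The equalizer of a reflexive pair of coalgebra morphisms is a subcoalgebra: if
`d⁰, d¹ : A → B` are coalgebra morphisms admitting a common `K`-linear retraction
`s : B → A`, then `E := ker (d⁰ − d¹)` satisfies `Δ_A x ∈ E ⊗ E` (the image of `E ⊗ E`
in `A ⊗ A`) for every `x ∈ E`. -/
theorem reflexive_equalizer_is_subcoalgebra (K : Type) [Field K]
    (A B : Type) [AddCommGroup A] [Module K A] [Coalgebra K A]
    [AddCommGroup B] [Module K B] [Coalgebra K B]
    (d0 d1 : A →ₗc[K] B) (s : B →ₗ[K] A)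
    (h0 : s ∘ₗ d0.toLinearMap = LinearMap.id)
    (h1 : s ∘ₗ d1.toLinearMap = LinearMap.id) :
    ∀ x ∈ LinearMap.ker (d0.toLinearMap - d1.toLinearMap),
      Coalgebra.comul (R := K) x ∈
        LinearMap.range (TensorProduct.mapIncl
          (LinearMap.ker (d0.toLinearMap - d1.toLinearMap))
          (LinearMap.ker (d0.toLinearMap - d1.toLinearMap))) := by
  intro x hx
  set f := d0.toLinearMap - d1.toLinearMap with hf
  set E := LinearMap.ker f with hE
  set ι := E.subtype with hι
  have hdx : d0.toLinearMap x = d1.toLinearMap x := by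
    have := LinearMap.mem_ker.mp hx
    rw [hf] at this
    simpa [sub_eq_zero] using this
  -- comul commutes with d0, d1
  have hc0 : TensorProduct.map d0.toLinearMap d0.toLinearMap (Coalgebra.comul (R := K) x)
      = Coalgebra.comul (R := K) (d0.toLinearMap x) :=
    congrFun (congrArg DFunLike.coe d0.map_comp_comul) x
  have hc1 : TensorProduct.map d1.toLinearMap d1.toLinearMap (Coalgebra.comul (R := K) x)
      = Coalgebra.comul (R := K) (d1.toLinearMap x) :=
    congrFun (congrArg DFunLike.coe d1.map_comp_comul) x
  -- key identities using the retraction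
  have key0 : (LinearMap.lTensor B s) ∘ₗ (TensorProduct.map d0.toLinearMap d0.toLinearMap)
      = d0.toLinearMap.rTensor A := by
    rw [LinearMap.lTensor, LinearMap.rTensor, ← TensorProduct.map_comp, LinearMap.id_comp, h0]
  have key1 : (LinearMap.lTensor B s) ∘ₗ (TensorProduct.map d1.toLinearMap d1.toLinearMap)
      = d1.toLinearMap.rTensor A := by
    rw [LinearMap.lTensor, LinearMap.rTensor, ← TensorProduct.map_comp, LinearMap.id_comp, h1]
  have key0' : (LinearMap.rTensor B s) ∘ₗ (TensorProduct.map d0.toLinearMap d0.toLinearMap)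
      = d0.toLinearMap.lTensor A := by
    rw [LinearMap.lTensor, LinearMap.rTensor, ← TensorProduct.map_comp, LinearMap.id_comp, h0]
  have key1' : (LinearMap.rTensor B s) ∘ₗ (TensorProduct.map d1.toLinearMap d1.toLinearMap)
      = d1.toLinearMap.lTensor A := by
    rw [LinearMap.lTensor, LinearMap.rTensor, ← TensorProduct.map_comp, LinearMap.id_comp, h1]
  have hrT : f.rTensor A (Coalgebra.comul (R := K) x) = 0 := by
    rw [hf, LinearMap.rTensor_sub, LinearMap.sub_apply, ← key0, ← key1]
    simp only [LinearMap.comp_apply, hc0, hc1, hdx, sub_self]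
  have hlT : f.lTensor A (Coalgebra.comul (R := K) x) = 0 := by
    rw [hf, LinearMap.lTensor_sub, LinearMap.sub_apply, ← key0', ← key1']
    simp only [LinearMap.comp_apply, hc0, hc1, hdx, sub_self]
  -- exactness of E → A → B
  have hexact : Function.Exact ι f :=
    LinearMap.exact_iff.mpr (Submodule.range_subtype E).symm
  -- tensoring with A on the right is exact
  have hexactR : Function.Exact (ι.rTensor A) (f.rTensor A) :=
    Module.Flat.rTensor_exact A hexact
  obtain ⟨y, hy⟩ := (hexactR (Coalgebra.comul (R := K) x)).mp hrT
  -- show (f.lTensor E) y = 0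
  have hyl : f.lTensor E y = 0 := by
    have hcomm : ι.rTensor B (f.lTensor E y) = f.lTensor A (ι.rTensor A y) := by
      have h₁ := LinearMap.rTensor_comp_lTensor (f := ι) (g := f)
      have h₂ := LinearMap.lTensor_comp_rTensor (f := ι) (g := f)
      calc ι.rTensor B (f.lTensor E y) = ((ι.rTensor B) ∘ₗ (f.lTensor E)) y := rfl
        _ = (TensorProduct.map ι f) y := by rw [h₁]
        _ = ((f.lTensor A) ∘ₗ (ι.rTensor A)) y := by rw [h₂]
        _ = f.lTensor A (ι.rTensor A y) := rfl
    have hz : ι.rTensor B (f.lTensor E y) = 0 := by rw [hcomm, hy, hlT]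
    exact Module.Flat.rTensor_preserves_injective_linearMap ι (Submodule.injective_subtype E)
      (by simpa using hz)
  -- tensoring with E on the left is exact
  have hexactL : Function.Exact (ι.lTensor E) (f.lTensor E) :=
    Module.Flat.lTensor_exact E hexact
  obtain ⟨z, hz⟩ := (hexactL y).mp hyl
  refine ⟨z, ?_⟩
  have : TensorProduct.mapIncl E E z = ι.rTensor A (ι.lTensor E z) := by
    rw [show ι.rTensor A (ι.lTensor E z) = ((ι.rTensor A) ∘ₗ (ι.lTensor E)) z from rfl,
      LinearMap.rTensor_comp_lTensor]
  rw [this, hz, hy]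
end

section
/- Let K be a field, let d⁰, d¹ : M → N be K-linear maps of K-vector spaces, and suppose there is a K-linear map s : N → M with s ∘ d⁰ = id_M = s ∘ d¹. Set E := ker(d⁰ − d¹). Then the kernel of the K-linear map d⁰ ⊗ d⁰ − d¹ ⊗ d¹ : M ⊗ M → N ⊗ N equals E ⊗ E, i.e. the range of the canonical map E ⊗ E → M ⊗ M induced by the inclusion E ≤ M. -/
open scoped TensorProduct

/-- For `K`-linear maps `d⁰, d¹ : M → N` admitting a common linear retraction
`s : N → M`, the kernel of `d⁰ ⊗ d⁰ − d¹ ⊗ d¹ : M ⊗ M → N ⊗ N` equals `E ⊗ E`,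
where `E = ker (d⁰ − d¹)` and `E ⊗ E` denotes the range of the canonical map
`E ⊗ E → M ⊗ M`. -/
theorem ker_tensor_sub_of_reflexive_pair (K : Type) [Field K]
    (M N : Type) [AddCommGroup M] [Module K M] [AddCommGroup N] [Module K N]
    (d0 d1 : M →ₗ[K] N) (s : N →ₗ[K] M)
    (h0 : s ∘ₗ d0 = LinearMap.id) (h1 : s ∘ₗ d1 = LinearMap.id) :
    LinearMap.ker (TensorProduct.map d0 d0 - TensorProduct.map d1 d1) =
      LinearMap.range (TensorProduct.mapIncl
        (LinearMap.ker (d0 - d1)) (LinearMap.ker (d0 - d1))) := by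
  set f := d0 - d1 with hf
  set E := LinearMap.ker f with hE
  -- exactness of E → M → N
  have hexact : Function.Exact E.subtype f := by
    intro y
    constructor
    · intro hy
      exact ⟨⟨y, hy⟩, rfl⟩
    · rintro ⟨⟨z, hz⟩, rfl⟩
      exact hz
  apply le_antisymm
  · -- hard direction
    intro x hx
    have hx : TensorProduct.map d0 d0 x = TensorProduct.map d1 d1 x := by
      have := LinearMap.mem_ker.mp hx
      rw [LinearMap.sub_apply, sub_eq_zero] at this
      exact this
    -- step 1 : (f ⊗ id) x = 0
    have key1 : LinearMap.rTensor M f x = 0 := by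
      have h : LinearMap.lTensor N s (TensorProduct.map d0 d0 x)
          = LinearMap.lTensor N s (TensorProduct.map d1 d1 x) := by rw [hx]
      have e0 : LinearMap.lTensor N s ∘ₗ TensorProduct.map d0 d0
          = TensorProduct.map d0 LinearMap.id := by
        rw [LinearMap.lTensor, ← TensorProduct.map_comp, LinearMap.id_comp, h0]
      have e1 : LinearMap.lTensor N s ∘ₗ TensorProduct.map d1 d1
          = TensorProduct.map d1 LinearMap.id := by
        rw [LinearMap.lTensor, ← TensorProduct.map_comp, LinearMap.id_comp, h1]
      have h0' := LinearMap.congr_fun e0 x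
      have h1' := LinearMap.congr_fun e1 x
      simp only [LinearMap.comp_apply] at h0' h1'
      rw [h0', h1'] at h
      have : LinearMap.rTensor M f = TensorProduct.map d0 LinearMap.id
          - TensorProduct.map d1 LinearMap.id := by
        ext m m'
        simp [hf, TensorProduct.sub_tmul]
      rw [this, LinearMap.sub_apply, h, sub_self]
    -- step 2 : (id ⊗ f) x = 0
    have key2 : LinearMap.lTensor M f x = 0 := by
      have h : LinearMap.rTensor N s (TensorProduct.map d0 d0 x)
          = LinearMap.rTensor N s (TensorProduct.map d1 d1 x) := by rw [hx]
      have e0 : LinearMap.rTensor N s ∘ₗ TensorProduct.map d0 d0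
          = TensorProduct.map LinearMap.id d0 := by
        rw [LinearMap.rTensor, ← TensorProduct.map_comp, LinearMap.id_comp, h0]
      have e1 : LinearMap.rTensor N s ∘ₗ TensorProduct.map d1 d1
          = TensorProduct.map LinearMap.id d1 := by
        rw [LinearMap.rTensor, ← TensorProduct.map_comp, LinearMap.id_comp, h1]
      have h0' := LinearMap.congr_fun e0 x
      have h1' := LinearMap.congr_fun e1 x
      simp only [LinearMap.comp_apply] at h0' h1'
      rw [h0', h1'] at h
      have : LinearMap.lTensor M f = TensorProduct.map LinearMap.id d0
          - TensorProduct.map LinearMap.id d1 := by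
        ext m m'
        simp [hf, TensorProduct.tmul_sub]
      rw [this, LinearMap.sub_apply, h, sub_self]
    -- x ∈ E ⊗ M
    obtain ⟨y, hy⟩ := (Module.Flat.rTensor_exact (R := K) M hexact x).mp key1
    -- push lTensor through
    have hcomm : LinearMap.lTensor M f (LinearMap.rTensor M E.subtype y)
        = LinearMap.rTensor N E.subtype (LinearMap.lTensor E f y) := by
      have h1c := LinearMap.congr_fun
        (LinearMap.lTensor_comp_rTensor (f := E.subtype) (g := f)) y
      have h2c := LinearMap.congr_fun
        (LinearMap.rTensor_comp_lTensor (f := E.subtype) (g := f)) y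
      simp only [LinearMap.comp_apply] at h1c h2c
      rw [h1c]; exact h2c.symm
    have hinj : Function.Injective (LinearMap.rTensor (E ⧸ (⊥ : Submodule K E)) E.subtype) :=
      Module.Flat.rTensor_preserves_injective_linearMap _ E.injective_subtype
    have hinj' : Function.Injective (LinearMap.rTensor N E.subtype) :=
      Module.Flat.rTensor_preserves_injective_linearMap _ E.injective_subtype
    have hy0 : LinearMap.lTensor E f y = 0 := by
      apply hinj'
      rw [← hcomm, hy, key2, map_zero]
    obtain ⟨z, hz⟩ := (Module.Flat.lTensor_exact (R := K) E hexact y).mp hy0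
    refine ⟨z, ?_⟩
    have : TensorProduct.mapIncl E E z
        = LinearMap.rTensor M E.subtype (LinearMap.lTensor E E.subtype z) := by
      have h3c := LinearMap.congr_fun
        (LinearMap.rTensor_comp_lTensor (f := E.subtype) (g := E.subtype)) z
      simp only [LinearMap.comp_apply] at h3c
      exact h3c.symm
    rw [this, hz, hy]
  · -- easy direction
    rintro x ⟨y, rfl⟩
    rw [LinearMap.mem_ker, LinearMap.sub_apply, sub_eq_zero]
    induction y using TensorProduct.induction_on with
    | zero => simp
    | tmul a b =>
        obtain ⟨a, ha⟩ := a
        obtain ⟨b, hb⟩ := b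
        have ha' : d0 a = d1 a := by
          have := LinearMap.mem_ker.mp ha; rwa [LinearMap.sub_apply, sub_eq_zero] at this
        have hb' : d0 b = d1 b := by
          have := LinearMap.mem_ker.mp hb; rwa [LinearMap.sub_apply, sub_eq_zero] at this
        simp [TensorProduct.mapIncl, ha', hb']
    | add u v hu hv =>
        simp only [TensorProduct.mapIncl] at hu hv
        simp [map_add, hu, hv]
end

section
/- Let K be a field, V a K-vector space, and A, B subspaces of V. Then, as subspaces of V ⊗ V, (A ⊗ A) ∩ (B ⊗ B) = (A ∩ B) ⊗ (A ∩ B). -/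
/-!
For submodules `P ≤ M`, `Q ≤ N` with `N ⧸ Q` flat, the image of `P ⊗ Q` in `M ⊗ N` is the
intersection of the images of `P ⊗ N` and `M ⊗ Q`: an element of `P ⊗ N` killed by
`M ⊗ N → M ⊗ (N ⧸ Q)` is killed by `P ⊗ N → P ⊗ (N ⧸ Q)`, hence comes from `P ⊗ Q`.
Tensoring with a flat module preserves intersections of submodules, since `A ⊓ B` is the kernel
of `M → (M ⧸ A) × (M ⧸ B)` and tensor products commute with finite products. Over a field
everything is flat, so both sides of the theorem equal `(A ⊗ V) ⊓ (B ⊗ V) ⊓ (V ⊗ A) ⊓ (V ⊗ B)`.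
-/

open scoped TensorProduct
open LinearMap

variable {R : Type*} [CommRing R] {M N P Q : Type*} [AddCommGroup M] [Module R M]
  [AddCommGroup N] [Module R N] [AddCommGroup P] [Module R P] [AddCommGroup Q] [Module R Q]

namespace LinearMap

theorem ker_rTensor_prod (f : M →ₗ[R] P) (g : M →ₗ[R] Q) :
    ker (rTensor N (f.prod g)) = ker (rTensor N f) ⊓ ker (rTensor N g) := by
  rw [← ker_prod, ← LinearEquiv.ker_comp (TensorProduct.prodLeft R R P Q N)]
  congr 1
  ext <;> rfl

theorem ker_lTensor_prod (f : M →ₗ[R] P) (g : M →ₗ[R] Q) :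
    ker (lTensor N (f.prod g)) = ker (lTensor N f) ⊓ ker (lTensor N g) := by
  rw [← ker_prod, ← LinearEquiv.ker_comp (TensorProduct.prodRight R R N P Q)]
  congr 1
  ext <;> rfl

end LinearMap

namespace Submodule

theorem range_rTensor_subtype (A : Submodule R M) :
    range (rTensor N A.subtype) = ker (rTensor N A.mkQ) :=
  (exact_iff.mp (rTensor_exact N (exact_subtype_mkQ A) A.mkQ_surjective)).symm

theorem range_lTensor_subtype (B : Submodule R N) :
    range (lTensor M B.subtype) = ker (lTensor M B.mkQ) :=
  (exact_iff.mp (lTensor_exact M (exact_subtype_mkQ B) B.mkQ_surjective)).symm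

theorem range_rTensor_subtype_inf [Module.Flat R N] (A B : Submodule R M) :
    range (rTensor N (A ⊓ B).subtype) =
      range (rTensor N A.subtype) ⊓ range (rTensor N B.subtype) := by
  have hker : ker (A.mkQ.prod B.mkQ) = A ⊓ B := by simp [ker_prod]
  have hexact := Module.Flat.rTensor_exact N (exact_subtype_ker_map (A.mkQ.prod B.mkQ))
  rw [hker] at hexact
  rw [← exact_iff.mp hexact, ker_rTensor_prod, range_rTensor_subtype, range_rTensor_subtype]

theorem range_lTensor_subtype_inf [Module.Flat R M] (A B : Submodule R N) :
    range (lTensor M (A ⊓ B).subtype) =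
      range (lTensor M A.subtype) ⊓ range (lTensor M B.subtype) := by
  have hker : ker (A.mkQ.prod B.mkQ) = A ⊓ B := by simp [ker_prod]
  have hexact := Module.Flat.lTensor_exact M (exact_subtype_ker_map (A.mkQ.prod B.mkQ))
  rw [hker] at hexact
  rw [← exact_iff.mp hexact, ker_lTensor_prod, range_lTensor_subtype, range_lTensor_subtype]

theorem range_mapIncl_eq_inf (A : Submodule R M) (B : Submodule R N) [Module.Flat R (N ⧸ B)] :
    range (TensorProduct.mapIncl A B) =
      range (rTensor N A.subtype) ⊓ range (lTensor M B.subtype) := by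
  have hr : TensorProduct.mapIncl A B = rTensor N A.subtype ∘ₗ lTensor A B.subtype :=
    (rTensor_comp_lTensor _ _ _).symm
  have hl : TensorProduct.mapIncl A B = lTensor M B.subtype ∘ₗ rTensor B A.subtype :=
    (lTensor_comp_rTensor _ _ _).symm
  refine le_antisymm (le_inf (hr ▸ range_comp_le_range _ _) (hl ▸ range_comp_le_range _ _)) ?_
  intro x hx
  obtain ⟨⟨y, rfl⟩, hy⟩ := mem_inf.mp hx
  rw [range_lTensor_subtype, mem_ker] at hy
  have hyB : lTensor A B.mkQ y = 0 := by
    apply Module.Flat.rTensor_preserves_injective_linearMap A.subtype A.injective_subtype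
    rw [map_zero, ← hy, ← comp_apply, ← comp_apply, rTensor_comp_lTensor, lTensor_comp_rTensor]
  obtain ⟨z, rfl⟩ : y ∈ range (lTensor A B.subtype) := by
    rwa [range_lTensor_subtype, mem_ker]
  exact ⟨z, by rw [hr, comp_apply]⟩

end Submodule

/-- For subspaces `A`, `B` of a `K`-vector space `V`, one has
`(A ⊗ A) ⊓ (B ⊗ B) = (A ⊓ B) ⊗ (A ⊓ B)` as subspaces of `V ⊗ V`, where `P ⊗ Q` denotes
the range of the canonical map `P ⊗ Q → V ⊗ V`. -/
theorem inf_tensor_square (K : Type) [Field K]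
    (V : Type) [AddCommGroup V] [Module K V] (A B : Submodule K V) :
    LinearMap.range (TensorProduct.mapIncl A A) ⊓
        LinearMap.range (TensorProduct.mapIncl B B) =
      LinearMap.range (TensorProduct.mapIncl (A ⊓ B) (A ⊓ B)) := by
  rw [Submodule.range_mapIncl_eq_inf, Submodule.range_mapIncl_eq_inf,
    Submodule.range_mapIncl_eq_inf, Submodule.range_rTensor_subtype_inf,
    Submodule.range_lTensor_subtype_inf, inf_inf_inf_comm]
end

section
/- Intersections of decreasing chains of subspaces commute with tensor squares: let K be a field, V a K-vector space, and (M_r)_{r ∈ ℕ} a decreasing sequence of subspaces of V (M_{r+1} ≤ M_r for all r). Then, as subspaces of V ⊗ V, ⋂_{r ∈ ℕ} (M_r ⊗ M_r) = (⋂_{r ∈ ℕ} M_r) ⊗ (⋂_{r ∈ ℕ} M_r). -/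
/-!
Flatness makes tensoring preserve the intersections `P ∩ Q` and
`P ⊗ P' = (P ⊗ W) ∩ (V ⊗ P')`, so over a field `(P ⊗ P') ∩ (Q ⊗ Q') = (P ∩ Q) ⊗ (P' ∩ Q')`.
An element of `⋂ r, M r ⊗ M r` lies in `F ⊗ F` for some finite-dimensional `F`; the
decreasing chain `F ∩ M r` stabilises, so `F ∩ M n ⊆ ⋂ r, M r` for some `n`, and the element
lies in `(F ∩ M n) ⊗ (F ∩ M n)`.
-/

open LinearMap Submodule TensorProduct

namespace TensorProduct

variable {R : Type*} [CommRing R] {V W : Type*} [AddCommGroup V] [Module R V]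
  [AddCommGroup W] [Module R W]

lemma range_rTensor_le_range_rTensor_subtype {N : Type*} [AddCommGroup N] [Module R N]
    {f : N →ₗ[R] V} {S : Submodule R V} (hf : range f ≤ S) :
    range (f.rTensor W) ≤ range (S.subtype.rTensor W) := by
  have hfactor : f = S.subtype ∘ₗ f.codRestrict S fun n ↦ hf ⟨n, rfl⟩ := rfl
  rw [hfactor, rTensor_comp]
  exact range_comp_le_range _ _

lemma range_lTensor_le_range_lTensor_subtype {N : Type*} [AddCommGroup N] [Module R N]
    {f : N →ₗ[R] W} {S : Submodule R W} (hf : range f ≤ S) :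
    range (f.lTensor V) ≤ range (S.subtype.lTensor V) := by
  have hfactor : f = S.subtype ∘ₗ f.codRestrict S fun n ↦ hf ⟨n, rfl⟩ := rfl
  rw [hfactor, lTensor_comp]
  exact range_comp_le_range _ _

lemma range_rTensor_inf_subtype [Module.Flat R W] (P Q : Submodule R V) :
    range ((P ⊓ Q).subtype.rTensor W) =
      range (P.subtype.rTensor W) ⊓ range (Q.subtype.rTensor W) := by
  refine le_antisymm (le_inf
    (range_rTensor_le_range_rTensor_subtype (by simp))
    (range_rTensor_le_range_rTensor_subtype (by simp))) ?_
  rintro _ ⟨hP, y, rfl⟩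
  set g := P.mkQ ∘ₗ Q.subtype
  have hy : g.rTensor W y = 0 := by
    rwa [← rTensor_mkQ, SetLike.mem_coe, mem_ker, ← LinearMap.comp_apply,
      ← rTensor_comp] at hP
  obtain ⟨z, rfl⟩ := (Module.Flat.rTensor_exact W g.exact_subtype_ker_map y).mp hy
  rw [← LinearMap.comp_apply, ← rTensor_comp]
  refine range_rTensor_le_range_rTensor_subtype ?_ ⟨z, rfl⟩
  rintro _ ⟨⟨q, hq⟩, rfl⟩
  simpa [g] using hq

lemma range_lTensor_inf_subtype [Module.Flat R V] (P Q : Submodule R W) :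
    range ((P ⊓ Q).subtype.lTensor V) =
      range (P.subtype.lTensor V) ⊓ range (Q.subtype.lTensor V) := by
  refine le_antisymm (le_inf
    (range_lTensor_le_range_lTensor_subtype (by simp))
    (range_lTensor_le_range_lTensor_subtype (by simp))) ?_
  rintro _ ⟨hP, y, rfl⟩
  set g := P.mkQ ∘ₗ Q.subtype
  have hy : g.lTensor V y = 0 := by
    rwa [← lTensor_mkQ, SetLike.mem_coe, mem_ker, ← LinearMap.comp_apply,
      ← lTensor_comp] at hP
  obtain ⟨z, rfl⟩ := (Module.Flat.lTensor_exact V g.exact_subtype_ker_map y).mp hy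
  rw [← LinearMap.comp_apply, ← lTensor_comp]
  refine range_lTensor_le_range_lTensor_subtype ?_ ⟨z, rfl⟩
  rintro _ ⟨⟨q, hq⟩, rfl⟩
  simpa [g] using hq

lemma range_mapIncl_eq_range_rTensor_inf_range_lTensor (P : Submodule R V) (P' : Submodule R W)
    [Module.Flat R (V ⧸ P)] :
    range (mapIncl P P') = range (P.subtype.rTensor W) ⊓ range (P'.subtype.lTensor V) := by
  refine le_antisymm (le_inf ?_ ?_) ?_
  · rw [mapIncl, ← rTensor_comp_lTensor]
    exact range_comp_le_range _ _
  · rw [mapIncl, ← lTensor_comp_rTensor]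
    exact range_comp_le_range _ _
  rintro _ ⟨hP, y, rfl⟩
  have hy : P.mkQ.rTensor P' y = 0 := by
    refine Module.Flat.lTensor_preserves_injective_linearMap P'.subtype P'.injective_subtype ?_
    rw [← rTensor_mkQ, SetLike.mem_coe, mem_ker, ← LinearMap.comp_apply,
      rTensor_comp_lTensor, ← lTensor_comp_rTensor, LinearMap.comp_apply] at hP
    rwa [map_zero]
  obtain ⟨z, rfl⟩ : y ∈ range (P.subtype.rTensor P') := rTensor_mkQ P' P ▸ hy
  exact ⟨z, by rw [mapIncl, ← lTensor_comp_rTensor, LinearMap.comp_apply]⟩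

lemma range_mapIncl_inf {K : Type*} [Field K] [Module K V] [Module K W]
    (P Q : Submodule K V) (P' Q' : Submodule K W) :
    range (mapIncl (P ⊓ Q) (P' ⊓ Q')) = range (mapIncl P P') ⊓ range (mapIncl Q Q') := by
  simp only [range_mapIncl_eq_range_rTensor_inf_range_lTensor, range_rTensor_inf_subtype,
    range_lTensor_inf_subtype, inf_inf_inf_comm]

end TensorProduct

lemma Submodule.exists_inf_le_iInf_of_antitone {R V : Type*} [Ring R] [AddCommGroup V]
    [Module R V] (F : Submodule R V) [IsArtinian R F] {M : ℕ → Submodule R V}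
    (hM : Antitone M) :
    ∃ n, F ⊓ M n ≤ ⨅ r, M r := by
  obtain ⟨n, hn⟩ := IsArtinian.monotone_stabilizes
    ⟨fun r ↦ OrderDual.toDual ((M r).comap F.subtype), fun _ _ h ↦ comap_mono (hM h)⟩
  refine ⟨n, le_iInf fun r ↦ ?_⟩
  rintro x ⟨hxF, hxn⟩
  rcases le_total n r with h | h
  · have hnr : (M n).comap F.subtype = (M r).comap F.subtype := hn r h
    exact hnr.le (show (⟨x, hxF⟩ : F) ∈ (M n).comap F.subtype from hxn)
  · exact hM h hxn

/-- Intersections of decreasing chains of subspaces commute with tensor squares: for a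
decreasing sequence `(M_r)_{r ∈ ℕ}` of subspaces of a `K`-vector space `V`,
`⋂_r (M_r ⊗ M_r) = (⋂_r M_r) ⊗ (⋂_r M_r)` as subspaces of `V ⊗ V`, where `P ⊗ Q` denotes
the range of the canonical map `P ⊗ Q → V ⊗ V`. -/
theorem iInf_tensor_square_of_antitone (K : Type) [Field K]
    (V : Type) [AddCommGroup V] [Module K V]
    (M : ℕ → Submodule K V) (hM : ∀ r, M (r + 1) ≤ M r) :
    (⨅ r : ℕ, LinearMap.range (TensorProduct.mapIncl (M r) (M r))) =
      LinearMap.range (TensorProduct.mapIncl (⨅ r : ℕ, M r) (⨅ r : ℕ, M r)) := by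
  refine le_antisymm (fun x hx ↦ ?_)
    (le_iInf fun r ↦ range_mapIncl_mono (iInf_le M r) (iInf_le M r))
  obtain ⟨M₁, M₂, _, _, hx₁₂⟩ :=
    exists_finite_submodule_of_setFinite {x} (Set.finite_singleton x)
  set F := M₁ ⊔ M₂
  have hxF : x ∈ range (mapIncl F F) := range_mapIncl_mono le_sup_left le_sup_right (hx₁₂ rfl)
  obtain ⟨n, hn⟩ := F.exists_inf_le_iInf_of_antitone (antitone_nat_of_succ_le hM)
  have hxn : x ∈ range (mapIncl (M n) (M n)) := mem_iInf _ |>.mp hx n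
  have hxFn : x ∈ range (mapIncl (F ⊓ M n) (F ⊓ M n)) := by
    rw [range_mapIncl_inf]
    exact ⟨hxF, hxn⟩
  exact range_mapIncl_mono hn hn hxFn
end

section
/- Let R be a commutative ring, A a free R-module, and (B_j)_{j ∈ J} an arbitrary family of R-modules. Then the canonical R-linear map A ⊗_R (∏_{j ∈ J} B_j) → ∏_{j ∈ J} (A ⊗_R B_j), sending a ⊗ (b_j)_j to (a ⊗ b_j)_j, is injective. -/
/-! Since `piRightHom` is natural in the left factor, one may replace `A` by `ι →₀ R` along a
basis. Then `A ⊗ ∏ B_j ≅ ι →₀ ∏ B_j` and `A ⊗ B_j ≅ ι →₀ B_j`, and under these identifications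
`piRightHom` becomes the inclusion `(ι →₀ ∏ B_j) → ∏ (ι →₀ B_j)`, which is injective. -/

open TensorProduct

namespace TensorProduct

variable {R : Type*} [CommSemiring R] {J : Type*} (B : J → Type*)
  [∀ j, AddCommMonoid (B j)] [∀ j, Module R (B j)]

theorem piRightHom_rTensor {A A' : Type*} [AddCommMonoid A] [Module R A]
    [AddCommMonoid A'] [Module R A'] (f : A →ₗ[R] A') (x : A ⊗[R] (∀ j, B j)) (j : J) :
    piRightHom R R A' B (f.rTensor _ x) j = f.rTensor (B j) (piRightHom R R A B x j) := by
  induction x using TensorProduct.induction_on with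
  | zero => simp
  | tmul a b => simp
  | add x y hx hy => simp only [map_add, Pi.add_apply, hx, hy]

theorem piRightHom_injective_of_linearEquiv {A A' : Type*} [AddCommMonoid A] [Module R A]
    [AddCommMonoid A'] [Module R A'] (e : A ≃ₗ[R] A')
    (h : Function.Injective (piRightHom R R A' B)) :
    Function.Injective (piRightHom R R A B) := by
  have he : Function.Injective ((e : A →ₗ[R] A').rTensor (∀ j, B j)) := (e.rTensor _).injective
  intro x y hxy
  apply he
  apply h
  funext j
  rw [piRightHom_rTensor, piRightHom_rTensor, hxy]

theorem finsuppScalarLeft_apply_piRightHom {ι : Type*} [DecidableEq ι]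
    (x : (ι →₀ R) ⊗[R] (∀ j, B j)) (i : ι) (j : J) :
    finsuppScalarLeft R (B j) ι (piRightHom R R (ι →₀ R) B x j) i =
      finsuppScalarLeft R (∀ j, B j) ι x i j := by
  induction x using TensorProduct.induction_on with
  | zero => simp
  | tmul p b => simp
  | add x y hx hy => simp only [map_add, Pi.add_apply, Finsupp.add_apply, hx, hy]

theorem piRightHom_finsupp_injective (ι : Type*) :
    Function.Injective (piRightHom R R (ι →₀ R) B) := by
  classical
  intro x y hxy
  apply (finsuppScalarLeft R (∀ j, B j) ι).injective
  ext i j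
  rw [← finsuppScalarLeft_apply_piRightHom, ← finsuppScalarLeft_apply_piRightHom, hxy]

end TensorProduct

/-- For a commutative ring `R`, a free `R`-module `A` and an arbitrary family `(B_j)_{j ∈ J}` of
`R`-modules, the canonical `R`-linear map `A ⊗_R (∏ j, B j) → ∏ j, (A ⊗_R B j)`, sending
`a ⊗ (b_j)_j` to `(a ⊗ b_j)_j`, is injective. -/
theorem piRightHom_injective_of_free (R : Type) [CommRing R]
    (A : Type) [AddCommGroup A] [Module R A] [Module.Free R A]
    (J : Type) (B : J → Type) [∀ j, AddCommGroup (B j)] [∀ j, Module R (B j)] :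
    Function.Injective (TensorProduct.piRightHom R R A B) :=
  piRightHom_injective_of_linearEquiv B (Module.Free.chooseBasis R A).repr
    (piRightHom_finsupp_injective B _)
end

section
/- Let K be a field and f : V → W a morphism of ℤ-indexed cochain complexes of K-vector spaces. Form the pullback P of the canonical projection σ_W : Cone(𝟙_W) → W⟦1⟧ along the shifted morphism f⟦1⟧ : V⟦1⟧ → W⟦1⟧ in the category of cochain complexes, and let c : Cone(𝟙_V) → P be the morphism induced by the functorial map Cone(𝟙_V) → Cone(𝟙_W) determined by f together with σ_V : Cone(𝟙_V) → V⟦1⟧ (these two morphisms agree after composition to W⟦1⟧). If f is degreewise surjective, then c is degreewise surjective; if moreover f is a quasi-isomorphism, then c is also a quasi-isomorphism. -/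
/-!
Degreewise, `Cone(𝟙_W)ⁿ = Wⁿ⁺¹ ⊕ Wⁿ` and `σ_W` is `(w₁, w₀) ↦ -w₁`, so the pullback `P` has
components `{(w₁, w₀, v) | -w₁ = f v} ≅ Vⁿ⁺¹ ⊕ Wⁿ = Cone(f)ⁿ`: the square formed by
`Cone(f) → Cone(𝟙_W)` and `σ_f` is a pullback. Under `P ≅ Cone(f)` the morphism `c` becomes the
functorial map `Cone(𝟙_V) → Cone(f)`, `(v₁, v₀) ↦ (v₁, f v₀)`, which is surjective wherever `f` is.
If `f` is a quasi-isomorphism then `Cone(f)` is acyclic, as is `Cone(𝟙_V)`, so `c` is a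
quasi-isomorphism between acyclic complexes.
-/

open CategoryTheory CategoryTheory.Limits CochainComplex

lemma HomologicalComplex.isPullback_of_forall_isPullback_f {C : Type*} [Category C]
    [HasZeroMorphisms C] {ι : Type*} {c : ComplexShape ι} {X₁ X₂ X₃ X₄ : HomologicalComplex C c}
    {t : X₁ ⟶ X₂} {l : X₁ ⟶ X₃} {r : X₂ ⟶ X₄} {b : X₃ ⟶ X₄}
    (h : ∀ i, IsPullback (t.f i) (l.f i) (r.f i) (b.f i)) : IsPullback t l r b := by
  have w : t ≫ r = l ≫ b := by ext i; exact (h i).w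
  exact ⟨⟨w⟩, ⟨isLimitOfEval _ _ fun i =>
    (isLimitMapConePullbackConeEquiv (eval C c i) w).symm (h i).isLimit⟩⟩

lemma CategoryTheory.Limits.Concrete.isPullback_of_injective_of_exists {C : Type*} [Category C]
    {FC : C → C → Type*} {CC : C → Type*} [∀ X Y, FunLike (FC X Y) (CC X) (CC Y)]
    [ConcreteCategory C FC] [ReflectsLimitsOfShape WalkingCospan (forget C)]
    {X₁ X₂ X₃ X₄ : C} {t : X₁ ⟶ X₂} {l : X₁ ⟶ X₃} {r : X₂ ⟶ X₄} {b : X₃ ⟶ X₄}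
    (w : t ≫ r = l ≫ b) (hinj : ∀ x y, t x = t y → l x = l y → x = y)
    (hex : ∀ x₂ x₃, r x₂ = b x₃ → ∃ x₁, t x₁ = x₂ ∧ l x₁ = x₃) : IsPullback t l r b :=
  IsPullback.of_map_of_faithful (forget C) <| (Types.isPullback_iff _ _ _ _).2
    ⟨by rw [← Functor.map_comp, w, Functor.map_comp], fun x y h => hinj x y h.1 h.2, hex⟩

namespace CochainComplex.mappingCone

lemma quasiIso_iff_acyclic {C : Type*} [Category C] [Abelian C] {K L : CochainComplex C ℤ}
    (φ : K ⟶ L) : QuasiIso φ ↔ (mappingCone φ).Acyclic := by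
  rw [HomologicalComplex.acyclic_iff,
    ← HomotopyCategory.quotient_obj_mem_subcategoryAcyclic_iff_exactAt,
    ← HomologicalComplex.mem_quasiIso_iff, ← HomotopyCategory.quotient_map_mem_quasiIso_iff φ,
    HomotopyCategory.quasiIso_eq_trW_subcategoryAcyclic]
  exact ObjectProperty.trW_iff_of_distinguished _ _
    (HomotopyCategory.mappingCone_triangleh_distinguished φ)

variable {R : Type*} [Ring R] {X Y : CochainComplex (ModuleCat R) ℤ}

lemma exists_eq_inl_add_inr (φ : X ⟶ Y) (n : ℤ) (z : (mappingCone φ).X n) :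
    ∃ (x : X.X (n + 1)) (y : Y.X n), z = (inl φ).v (n + 1) n (by omega) x + (inr φ).f n y :=
  ⟨(fst φ).1.v n (n + 1) rfl z, (snd φ).v n n (add_zero n) z, by
    simpa using (ConcreteCategory.congr_hom (id_X φ n (n + 1) rfl) z).symm⟩

lemma snd_v_inl_add_inr (φ : X ⟶ Y) (n : ℤ) (x : X.X (n + 1)) (y : Y.X n) :
    (snd φ).v n n (add_zero n) ((inl φ).v (n + 1) n (by omega) x + (inr φ).f n y) = y := by
  have hx := ConcreteCategory.congr_hom (inl_v_snd_v φ (n + 1) n (by omega)) x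
  have hy := ConcreteCategory.congr_hom (inr_f_snd_v φ n) y
  simp only [ConcreteCategory.comp_apply] at hx hy
  simp [hx, hy]

-- The domain of `(triangle φ).mor₃` is only semireducibly `mappingCone φ`, hence the `erw`s.
lemma triangle_mor₃_f_inl_add_inr (φ : X ⟶ Y) (n : ℤ) (x : X.X (n + 1)) (y : Y.X n) :
    (triangle φ).mor₃.f n ((inl φ).v (n + 1) n (by omega) x + (inr φ).f n y) = -x := by
  have hx : (triangle φ).mor₃.f n ((inl φ).v (n + 1) n (by omega) x) = -x :=
    ConcreteCategory.congr_hom (inl_v_triangle_mor₃_f φ (n + 1) n (by omega)) x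
  have hy : (triangle φ).mor₃.f n ((inr φ).f n y) = 0 :=
    ConcreteCategory.congr_hom (inr_f_triangle_mor₃_f φ n) y
  erw [map_add, hx, hy, add_zero]

@[simp]
lemma map_f_inl_add_inr {X' Y' : CochainComplex (ModuleCat R) ℤ} (φ : X ⟶ Y) (φ' : X' ⟶ Y')
    (a : X ⟶ X') (b : Y ⟶ Y') (comm : φ ≫ b = a ≫ φ') (n : ℤ) (x : X.X (n + 1)) (y : Y.X n) :
    (map φ φ' a b comm).f n ((inl φ).v (n + 1) n (by omega) x + (inr φ).f n y) =
      (inl φ').v (n + 1) n (by omega) (a.f (n + 1) x) + (inr φ').f n (b.f n y) := by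
  have hx := ConcreteCategory.congr_hom (show (inl φ).v (n + 1) n (by omega) ≫
      (map φ φ' a b comm).f n = a.f (n + 1) ≫ (inl φ').v (n + 1) n (by omega) by simp [map]) x
  have hy := ConcreteCategory.congr_hom (show (inr φ).f n ≫ (map φ φ' a b comm).f n =
      b.f n ≫ (inr φ').f n by simp [map]) y
  simp only [ConcreteCategory.comp_apply] at hx hy
  simp [hx, hy]

lemma map_f_surjective {X' Y' : CochainComplex (ModuleCat R) ℤ} (φ : X ⟶ Y) (φ' : X' ⟶ Y')
    (a : X ⟶ X') (b : Y ⟶ Y') (comm : φ ≫ b = a ≫ φ') (n : ℤ)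
    (ha : Function.Surjective (a.f (n + 1))) (hb : Function.Surjective (b.f n)) :
    Function.Surjective ((map φ φ' a b comm).f n) := by
  intro z
  obtain ⟨x', y', rfl⟩ := exists_eq_inl_add_inr φ' n z
  obtain ⟨x, rfl⟩ := ha x'
  obtain ⟨y, rfl⟩ := hb y'
  exact ⟨(inl φ).v (n + 1) n (by omega) x + (inr φ).f n y, by simp⟩

theorem isPullback_map_triangle_mor₃ (φ : X ⟶ Y) :
    IsPullback (map φ (𝟙 Y) φ (𝟙 Y) (by simp)) (triangle φ).mor₃ (triangle (𝟙 Y)).mor₃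
      ((CategoryTheory.shiftFunctor (CochainComplex (ModuleCat R) ℤ) (1 : ℤ)).map φ) := by
  refine HomologicalComplex.isPullback_of_forall_isPullback_f fun n => ?_
  refine Concrete.isPullback_of_injective_of_exists (HomologicalComplex.congr_hom
    (triangleMap φ (𝟙 Y) φ (𝟙 Y) (by simp)).comm₃.symm n) ?_ ?_
  · intro z z' h₁ h₂
    obtain ⟨x, y, rfl⟩ := exists_eq_inl_add_inr φ n z
    obtain ⟨x', y', rfl⟩ := exists_eq_inl_add_inr φ n z'
    erw [triangle_mor₃_f_inl_add_inr, triangle_mor₃_f_inl_add_inr] at h₂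
    simp only [map_f_inl_add_inr, HomologicalComplex.id_f, ModuleCat.hom_id, LinearMap.id_coe,
      id_eq] at h₁
    have hy := congrArg ((snd (𝟙 Y)).v n n (add_zero n)) h₁
    simp only [snd_v_inl_add_inr] at hy
    rw [neg_injective h₂, hy]
  · intro w (x : X.X (n + 1)) hw
    obtain ⟨y₁, y₀, rfl⟩ := exists_eq_inl_add_inr (𝟙 Y) n w
    erw [triangle_mor₃_f_inl_add_inr, shiftFunctor_map_f'] at hw
    replace hw : φ.f (n + 1) x = -y₁ := hw.symm
    refine ⟨(inl φ).v (n + 1) n (by omega) (-x) + (inr φ).f n y₀, ?_, ?_⟩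
    · rw [map_f_inl_add_inr, map_neg, hw, neg_neg]
      rfl
    · erw [triangle_mor₃_f_inl_add_inr, neg_neg]

end CochainComplex.mappingCone

/-- For a degreewise surjective morphism `f : V ⟶ W` of cochain complexes of `K`-vector spaces,
the canonical morphism `c` from `Cone(𝟙_V)` to the pullback of the projection
`σ_W : Cone(𝟙_W) → W⟦1⟧` along `f⟦1⟧ : V⟦1⟧ → W⟦1⟧` — induced by the functorial map
`Cone(𝟙_V) → Cone(𝟙_W)` and `σ_V` — is degreewise surjective; and if moreover `f` is a
quasi-isomorphism then so is `c`. -/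
theorem cone_to_pullback_surjective_and_quasiIso (K : Type) [Field K]
    (V W : CochainComplex (ModuleCat K) ℤ) (f : V ⟶ W)
    (hf : ∀ n : ℤ, Function.Surjective (f.f n))
    (c : mappingCone (𝟙 V) ⟶
      pullback (mappingCone.triangle (𝟙 W)).mor₃
        ((CategoryTheory.shiftFunctor (CochainComplex (ModuleCat K) ℤ) (1 : ℤ)).map f))
    (hc₁ : c ≫ pullback.fst _ _ =
      mappingCone.map (𝟙 V) (𝟙 W) f f (by rw [CategoryTheory.Category.id_comp,
        CategoryTheory.Category.comp_id]))
    (hc₂ : c ≫ pullback.snd _ _ = (mappingCone.triangle (𝟙 V)).mor₃) :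
    (∀ n : ℤ, Function.Surjective (c.f n)) ∧ (QuasiIso f → QuasiIso c) := by
  have hP := mappingCone.isPullback_map_triangle_mor₃ f
  let m := mappingCone.map (𝟙 V) f (𝟙 V) f (by simp)
  have hc : c = m ≫ hP.isoPullback.hom := by
    apply pullback.hom_ext
    · erw [hc₁, Category.assoc, hP.isoPullback_hom_fst, ← mappingCone.map_comp]
      rfl
    · erw [hc₂, Category.assoc, hP.isoPullback_hom_snd,
        ← (mappingCone.triangleMap (𝟙 V) f (𝟙 V) f (by simp)).comm₃,
        mappingCone.triangleMap_hom₁, CategoryTheory.Functor.map_id, Category.comp_id]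
  subst hc
  refine ⟨fun n => ?_, fun hqf => ?_⟩
  · intro p
    obtain ⟨z, rfl⟩ := (ConcreteCategory.bijective_of_isIso (hP.isoPullback.hom.f n)).2 p
    obtain ⟨y, rfl⟩ := mappingCone.map_f_surjective (𝟙 V) f (𝟙 V) f (by simp) n
      (fun x => ⟨x, rfl⟩) (hf n) z
    exact ⟨y, rfl⟩
  · have hConeV := (mappingCone.quasiIso_iff_acyclic (𝟙 V)).1 inferInstance
    have hConeF := (mappingCone.quasiIso_iff_acyclic f).1 hqf
    have : QuasiIso m := (quasiIso_iff m).2 fun n =>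
      (quasiIsoAt_iff_exactAt m n (hConeV n)).2 (hConeF n)
    exact quasiIso_comp m hP.isoPullback.hom
end
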